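/- Under the assumptions of the averaging theorem, the shrinkage vector ω(ψ) = Λ V α(ψ) is a convex combination of the extreme shrinkage vectors: ω(ψ) = ∑_{τ∈[m,n]} p_τ(ψ) ω_{(τ)}, where p_τ(ψ) = ψ^τ π_τ / ∑_{s∈[m,n]} ψ^s π_s, each p_τ(ψ) ≥ 0, and ∑_τ p_τ(ψ) = 1. -/

import Mathlib

open Finset Matrix

/-- `(a,b)` entry `λ_{τ(a)}^{b+1}`: the matrix `S_τᵀ Λ V`. -/
noncomputable def selLV {m : ℕ} (l : Fin m → ℝ) (n : ℕ) (τ : Finset (Fin m))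
    (h : τ.card = n) : Matrix (Fin n) (Fin n) ℝ :=
  Matrix.of fun a b => l (τ.orderEmbOfFin h a) ^ ((b : ℕ) + 1)

/-- The extreme coefficient vector `α_{(τ)} = (S_τᵀ Λ V)⁻¹ 𝟙`. -/
noncomputable def alphaTau {m : ℕ} (l : Fin m → ℝ) (n : ℕ) (τ : Finset (Fin m))
    (h : τ.card = n) : Fin n → ℝ :=
  (selLV l n τ h)⁻¹ *ᵥ (fun _ => 1)

/-- The matrix `Vᵀ Ψ Λ V`, with `(a,b)` entry `∑ i, λ_i^a ψ_i λ_i^{b+1}`. -/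
noncomputable def Bmat {m : ℕ} (l ψ : Fin m → ℝ) (n : ℕ) : Matrix (Fin n) (Fin n) ℝ :=
  Matrix.of fun a b => ∑ i : Fin m, l i ^ (a : ℕ) * ψ i * l i ^ ((b : ℕ) + 1)

/-- The coefficient map `α(ψ) = (Vᵀ Ψ Λ V)⁻¹ Vᵀ ψ`. -/
noncomputable def alphaMap {m : ℕ} (l ψ : Fin m → ℝ) (n : ℕ) : Fin n → ℝ :=
  (Bmat l ψ n)⁻¹ *ᵥ (fun a => ∑ i : Fin m, l i ^ (a : ℕ) * ψ i)

/-- The shrinkage vector `ω(ψ) = Λ V α(ψ)`. -/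
noncomputable def omegaMap {m : ℕ} (l ψ : Fin m → ℝ) (n : ℕ) : Fin m → ℝ :=
  fun i => ∑ j : Fin n, l i ^ ((j : ℕ) + 1) * alphaMap l ψ n j

/-- The relative residual vector `z(ψ) = 𝟙 - ω(ψ)`. -/
noncomputable def zMap {m : ℕ} (l ψ : Fin m → ℝ) (n : ℕ) : Fin m → ℝ :=
  fun i => 1 - omegaMap l ψ n i

/-- `ψ^τ = ∏_{i∈τ} ψ_i`. -/
def psiPow {m : ℕ} (ψ : Fin m → ℝ) (τ : Finset (Fin m)) : ℝ := ∏ i ∈ τ, ψ i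

/-- `π_τ = (∏_{j∈τ} λ_j) ∏_{j<i∈τ} (λ_i - λ_j)²`. -/
def piTau {m : ℕ} (l : Fin m → ℝ) (τ : Finset (Fin m)) : ℝ :=
  (∏ j ∈ τ, l j) * ∏ j ∈ τ, ∏ i ∈ τ.filter (fun x => j < x), (l i - l j) ^ 2

/-- The number of nonzero entries of a vector. -/
noncomputable def suppCard {m : ℕ} (ψ : Fin m → ℝ) : ℕ :=
  ({i : Fin m | ψ i ≠ 0}).ncard

/-- The extreme shrinkage vector `ω_{(τ)} = Λ V (S_τᵀ Λ V)⁻¹ 𝟙`. -/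
noncomputable def omegaTau {m : ℕ} (l : Fin m → ℝ) (n : ℕ) (τ : Finset (Fin m))
    (h : τ.card = n) : Fin m → ℝ :=
  fun i => ∑ j : Fin n, l i ^ ((j : ℕ) + 1) * alphaTau l n τ h j

/-- The averaging weights `p_τ(ψ) = ψ^τ π_τ / ∑_s ψ^s π_s`. -/
noncomputable def pWeight {m n : ℕ} (l ψ : Fin m → ℝ) (τ : Finset (Fin m)) : ℝ :=
  psiPow ψ τ * piTau l τ /
    ∑ s ∈ Finset.powersetCard n (Finset.univ : Finset (Fin m)), psiPow ψ s * piTau l s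

/-!
Write `B = Vᵀ Ψ (ΛV)`. By the Cauchy–Binet formula `det B = ∑_τ ψ^τ det V_τ det (ΛV)_τ`, and the
product of these two Vandermonde minors is `π_τ`. By Cramer's rule `α(ψ)_j` is the determinant of
`B` with its `j`-th column replaced by `Vᵀψ = Vᵀ Ψ 𝟙`, divided by `det B`; that matrix is
`Vᵀ Ψ (ΛV with column j replaced by 𝟙)`, so Cauchy–Binet applies again, and by Cramer's rule for
`S_τᵀ Λ V` its `τ`-term is `ψ^τ π_τ α_{(τ),j}`. Hence `α(ψ) = ∑_τ p_τ α_{(τ)}`, and multiplying by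
`ΛV` gives the claim. The weights are nonnegative since `π_τ > 0`, and their denominator is
positive because `ψ` has `n` nonzero coordinates.
-/

namespace Finset

variable {α : Type*} [LinearOrder α] {k : ℕ}

theorem prod_comp_orderEmbOfFin {M : Type*} [CommMonoid M] (s : Finset α) (h : s.card = k)
    (f : α → M) : ∏ i, f (s.orderEmbOfFin h i) = ∏ x ∈ s, f x := by
  conv_rhs => rw [← s.image_orderEmbOfFin_univ h]
  exact (prod_image fun i _ j _ hij => (s.orderEmbOfFin h).injective hij).symm

theorem image_orderEmbOfFin_Ioi (s : Finset α) (h : s.card = k) (i : Fin k) :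
    (Ioi i).image (s.orderEmbOfFin h) = s.filter (s.orderEmbOfFin h i < ·) := by
  ext x
  constructor
  · intro hx
    obtain ⟨j, hj, rfl⟩ := mem_image.mp hx
    exact mem_filter.mpr
      ⟨s.orderEmbOfFin_mem h j, (s.orderEmbOfFin h).lt_iff_lt.mpr (mem_Ioi.mp hj)⟩
  · intro hx
    obtain ⟨hxs, hlt⟩ := mem_filter.mp hx
    obtain ⟨j, rfl⟩ : x ∈ Set.range (s.orderEmbOfFin h) := by
      rwa [range_orderEmbOfFin]
    exact mem_image_of_mem _ (mem_Ioi.mpr ((s.orderEmbOfFin h).lt_iff_lt.mp hlt))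

theorem prod_Ioi_comp_orderEmbOfFin {M : Type*} [CommMonoid M] (g : α → α → M) (s : Finset α)
    (h : s.card = k) :
    ∏ i : Fin k, ∏ j ∈ Ioi i, g (s.orderEmbOfFin h i) (s.orderEmbOfFin h j) =
      ∏ i ∈ s, ∏ j ∈ s.filter (i < ·), g i j := by
  rw [← prod_comp_orderEmbOfFin s h]
  refine prod_congr rfl fun i _ => ?_
  rw [← image_orderEmbOfFin_Ioi, prod_image fun a _ b _ hab => (s.orderEmbOfFin h).injective hab]

theorem exists_orderEmbOfFin_comp_perm {f : Fin k → α} (hf : Function.Injective f)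
    (h : (univ.image f).card = k) :
    ∃ σ : Equiv.Perm (Fin k), (univ.image f).orderEmbOfFin h ∘ σ = f := by
  have hrange : ∀ a, ∃ b, (univ.image f).orderEmbOfFin h b = f a := fun a => by
    rw [← Set.mem_range, range_orderEmbOfFin]
    exact mem_coe.mpr (mem_image_of_mem f (mem_univ a))
  choose s hs using hrange
  have hs_inj : Function.Injective s := fun a b hab => hf (by rw [← hs, hab, hs])
  exact ⟨.ofBijective s (Finite.injective_iff_bijective.mp hs_inj), funext hs⟩

theorem sum_injective_eq_sum_powersetCard_perm [Fintype α] {M : Type*} [AddCommMonoid M]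
    (g : (Fin k → α) → M) :
    ∑ f with Function.Injective f, g f =
      ∑ τ ∈ (powersetCard k (univ : Finset α)).attach, ∑ σ : Equiv.Perm (Fin k),
        g (τ.1.orderEmbOfFin (mem_powersetCard.mp τ.2).2 ∘ σ) := by
  have hrange (τ : Finset α) (h : τ.card = k) (σ : Equiv.Perm (Fin k)) :
      Set.range (τ.orderEmbOfFin h ∘ σ) = τ := by
    rw [Set.range_comp, σ.range_eq_univ, Set.image_univ, range_orderEmbOfFin]
  rw [sum_sigma']
  symm
  refine sum_bij (fun x _ => x.1.1.orderEmbOfFin (mem_powersetCard.mp x.1.2).2 ∘ x.2) ?_ ?_ ?_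
    (fun _ _ => rfl)
  · rintro ⟨τ, σ⟩ _
    exact mem_filter.mpr ⟨mem_univ _, (orderEmbOfFin _ _).injective.comp σ.injective⟩
  · rintro ⟨⟨τ₁, hτ₁⟩, σ₁⟩ _ ⟨⟨τ₂, hτ₂⟩, σ₂⟩ _ heq
    obtain rfl : τ₁ = τ₂ := coe_injective <| by
      rw [← hrange τ₁ (mem_powersetCard.mp hτ₁).2 σ₁, ← hrange τ₂ (mem_powersetCard.mp hτ₂).2 σ₂]
      exact congrArg Set.range heq
    obtain rfl : σ₁ = σ₂ := Equiv.ext fun a => (orderEmbOfFin _ _).injective (congrFun heq a)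
    rfl
  · intro f hf
    have hf_inj : Function.Injective f := (mem_filter.mp hf).2
    have hcard : (univ.image f).card = k := by
      rw [card_image_of_injective _ hf_inj, card_univ, Fintype.card_fin]
    obtain ⟨σ, hσ⟩ := exists_orderEmbOfFin_comp_perm hf_inj hcard
    exact ⟨⟨⟨univ.image f, mem_powersetCard.mpr ⟨subset_univ _, hcard⟩⟩, σ⟩,
      mem_sigma.mpr ⟨mem_attach _ _, mem_univ _⟩, hσ⟩

end Finset

namespace Matrix

section CauchyBinet

variable {ι R : Type*} [CommRing R] {n : ℕ}

theorem det_transpose_mul_eq_sum_fun [Fintype ι] (A C : Matrix ι (Fin n) R) :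
    (Aᵀ * C).det = ∑ f : Fin n → ι, (∏ a, A (f a) a) * (C.submatrix f id).det := by
  have hrows : Aᵀ * C = fun a => ∑ i, A i a • C i := by
    ext a b
    simp [mul_apply, Finset.sum_apply]
  rw [hrows]
  exact (detRowAlternating.toMultilinearMap.map_sum _).trans
    (sum_congr rfl fun f _ => detRowAlternating.toMultilinearMap.map_smul_univ _ _)

theorem det_submatrix_eq_zero_of_not_injective [DecidableEq ι] (C : Matrix ι (Fin n) R)
    {f : Fin n → ι} (hf : ¬ Function.Injective f) : (C.submatrix f id).det = 0 := by
  obtain ⟨a, b, hab, hne⟩ := Function.not_injective_iff.mp hf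
  exact det_zero_of_row_eq hne (by ext; simp [hab])

theorem sum_perm_mul_det_submatrix_comp (A C : Matrix ι (Fin n) R) (e : Fin n → ι) :
    ∑ σ : Equiv.Perm (Fin n), (∏ a, A (e (σ a)) a) * (C.submatrix (e ∘ σ) id).det =
      (A.submatrix e id).det * (C.submatrix e id).det := by
  rw [det_apply', sum_mul]
  refine sum_congr rfl fun σ _ => ?_
  rw [show C.submatrix (e ∘ σ) id = (C.submatrix e id).submatrix σ id from rfl, det_permute]
  simp only [submatrix_apply, id]
  ring

variable [Fintype ι] [LinearOrder ι]

theorem det_transpose_mul_eq_sum_minors (A C : Matrix ι (Fin n) R) :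
    (Aᵀ * C).det = ∑ τ ∈ (powersetCard n (univ : Finset ι)).attach,
      (A.submatrix (τ.1.orderEmbOfFin (mem_powersetCard.mp τ.2).2) id).det *
        (C.submatrix (τ.1.orderEmbOfFin (mem_powersetCard.mp τ.2).2) id).det := by
  rw [det_transpose_mul_eq_sum_fun, ← sum_filter_add_sum_filter_not univ Function.Injective,
    sum_eq_zero (s := filter (¬ Function.Injective ·) univ) fun f hf => by
      rw [det_submatrix_eq_zero_of_not_injective C (mem_filter.mp hf).2, mul_zero],
    add_zero, sum_injective_eq_sum_powersetCard_perm]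
  exact sum_congr rfl fun τ _ => sum_perm_mul_det_submatrix_comp A C _

theorem det_transpose_mul_diagonal_mul_eq_sum_minors (A C : Matrix ι (Fin n) R) (ψ : ι → R) :
    (Aᵀ * diagonal ψ * C).det = ∑ τ ∈ (powersetCard n (univ : Finset ι)).attach,
      (∏ i ∈ τ.1, ψ i) *
        ((A.submatrix (τ.1.orderEmbOfFin (mem_powersetCard.mp τ.2).2) id).det *
          (C.submatrix (τ.1.orderEmbOfFin (mem_powersetCard.mp τ.2).2) id).det) := by
  rw [show Aᵀ * diagonal ψ = (diagonal ψ * A)ᵀ by simp [transpose_mul],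
    det_transpose_mul_eq_sum_minors]
  refine sum_congr rfl fun τ _ => ?_
  rw [← mul_assoc, ← prod_comp_orderEmbOfFin _ (mem_powersetCard.mp τ.2).2, ← det_mul_column]
  congr 2
  ext a b
  simp [diagonal_mul]

end CauchyBinet

theorem rectVandermonde_one_submatrix {ι R : Type*} [CommRing R] {n : ℕ} (v : ι → R)
    (e : Fin n → ι) : (rectVandermonde v 1 n).submatrix e id = vandermonde (v ∘ e) := by
  ext
  simp [rectVandermonde_apply]

theorem det_vandermonde_comp_orderEmbOfFin_sq {α R : Type*} [LinearOrder α] [CommRing R] {n : ℕ}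
    (v : α → R) (τ : Finset α) (h : τ.card = n) :
    (vandermonde (v ∘ τ.orderEmbOfFin h)).det ^ 2 =
      ∏ j ∈ τ, ∏ i ∈ τ.filter (j < ·), (v i - v j) ^ 2 := by
  rw [det_vandermonde, ← prod_pow,
    ← prod_Ioi_comp_orderEmbOfFin (fun i j => (v j - v i) ^ 2) τ h]
  simp only [Function.comp_apply, prod_pow]

theorem det_updateCol_eq_det_mul_inv_mulVec {K ν : Type*} [Field K] [Fintype ν] [DecidableEq ν]
    (M : Matrix ν ν K) (hM : M.det ≠ 0) (b : ν → K) (j : ν) :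
    (M.updateCol j b).det = M.det * (M⁻¹ *ᵥ b) j := by
  rw [← cramer_apply, ← det_smul_inv_mulVec_eq_cramer M b (isUnit_iff_ne_zero.mpr hM)]
  rfl

end Matrix

section Shrinkage

variable {m n : ℕ}

theorem det_minor_mul_det_minor_eq_piTau (l : Fin m → ℝ) (τ : Finset (Fin m)) (h : τ.card = n) :
    ((rectVandermonde l 1 n).submatrix (τ.orderEmbOfFin h) id).det *
      ((diagonal l * rectVandermonde l 1 n).submatrix (τ.orderEmbOfFin h) id).det =
        piTau l τ := by
  have hΛ : (diagonal l * rectVandermonde l 1 n).submatrix (τ.orderEmbOfFin h) id =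
      diagonal (l ∘ τ.orderEmbOfFin h) * vandermonde (l ∘ τ.orderEmbOfFin h) := by
    ext a b
    simp [rectVandermonde_apply]
  rw [hΛ, det_mul, det_diagonal, rectVandermonde_one_submatrix]
  simp only [Function.comp_apply]
  rw [prod_comp_orderEmbOfFin τ h l, piTau, ← det_vandermonde_comp_orderEmbOfFin_sq l τ h]
  ring

theorem selLV_eq_submatrix (l : Fin m → ℝ) (τ : Finset (Fin m)) (h : τ.card = n) :
    selLV l n τ h = (diagonal l * rectVandermonde l 1 n).submatrix (τ.orderEmbOfFin h) id := by
  ext a b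
  simp [selLV, rectVandermonde_apply, pow_succ']

theorem piTau_ne_zero {l : Fin m → ℝ} (hl : ∀ i, l i ≠ 0) (hinj : Function.Injective l)
    (τ : Finset (Fin m)) : piTau l τ ≠ 0 :=
  mul_ne_zero (prod_ne_zero_iff.mpr fun i _ => hl i) (prod_ne_zero_iff.mpr fun _ _ =>
    prod_ne_zero_iff.mpr fun _ hi => pow_ne_zero 2 (sub_ne_zero.mpr fun hij =>
      (mem_filter.mp hi).2.ne (hinj hij).symm))

theorem piTau_pos {l : Fin m → ℝ} (hpos : ∀ i, 0 < l i) (hinj : Function.Injective l)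
    (τ : Finset (Fin m)) : 0 < piTau l τ :=
  lt_of_le_of_ne (mul_nonneg (prod_nonneg fun i _ => (hpos i).le)
      (prod_nonneg fun _ _ => prod_nonneg fun _ _ => sq_nonneg _))
    (piTau_ne_zero (fun i => (hpos i).ne') hinj τ).symm

theorem det_selLV_ne_zero {l : Fin m → ℝ} (hl : ∀ i, l i ≠ 0) (hinj : Function.Injective l)
    (τ : Finset (Fin m)) (h : τ.card = n) : (selLV l n τ h).det ≠ 0 := by
  intro h0
  apply piTau_ne_zero hl hinj τ
  rw [← det_minor_mul_det_minor_eq_piTau l τ h, ← selLV_eq_submatrix, h0, mul_zero]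

theorem Bmat_eq (l ψ : Fin m → ℝ) (n : ℕ) :
    Bmat l ψ n =
      (rectVandermonde l 1 n)ᵀ * diagonal ψ * (diagonal l * rectVandermonde l 1 n) := by
  ext a b
  rw [Bmat, of_apply, mul_apply]
  refine sum_congr rfl fun i _ => ?_
  simp only [mul_diagonal, diagonal_mul, transpose_apply, rectVandermonde_apply, Pi.one_apply,
    one_pow, mul_one]
  ring

theorem det_Bmat (l ψ : Fin m → ℝ) :
    (Bmat l ψ n).det = ∑ τ ∈ powersetCard n univ, psiPow ψ τ * piTau l τ := by
  rw [Bmat_eq, det_transpose_mul_diagonal_mul_eq_sum_minors,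
    ← sum_attach (powersetCard n univ) (fun τ => psiPow ψ τ * piTau l τ)]
  exact sum_congr rfl fun τ _ => by
    rw [det_minor_mul_det_minor_eq_piTau, psiPow]

theorem det_Bmat_updateCol {l : Fin m → ℝ} (hl : ∀ i, l i ≠ 0) (hinj : Function.Injective l)
    (ψ : Fin m → ℝ) (j : Fin n) :
    ((Bmat l ψ n).updateCol j (fun a => ∑ i, l i ^ (a : ℕ) * ψ i)).det =
      ∑ τ ∈ (powersetCard n univ).attach,
        psiPow ψ τ.1 * piTau l τ.1 * alphaTau l n τ.1 (mem_powersetCard.mp τ.2).2 j := by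
  have hcol : (Bmat l ψ n).updateCol j (fun a => ∑ i, l i ^ (a : ℕ) * ψ i) =
      (rectVandermonde l 1 n)ᵀ * diagonal ψ *
        (diagonal l * rectVandermonde l 1 n).updateCol j (fun _ => 1) := by
    rw [mul_updateCol, Bmat_eq]
    congr 1
    ext a
    simp [mulVec, dotProduct, mul_diagonal, rectVandermonde_apply]
  rw [hcol, det_transpose_mul_diagonal_mul_eq_sum_minors]
  refine sum_congr rfl fun τ _ => ?_
  set h := (mem_powersetCard.mp τ.2).2
  have hminor : ((diagonal l * rectVandermonde l 1 n).updateCol j (fun _ => 1)).submatrix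
      (τ.1.orderEmbOfFin h) id = (selLV l n τ.1 h).updateCol j (fun _ => 1) := by
    rw [selLV_eq_submatrix]
    ext a b
    by_cases hb : b = j <;> simp [hb]
  rw [hminor, det_updateCol_eq_det_mul_inv_mulVec _ (det_selLV_ne_zero hl hinj τ.1 h),
    ← det_minor_mul_det_minor_eq_piTau l τ.1 h, ← selLV_eq_submatrix, psiPow, alphaTau]
  ring

variable {l ψ : Fin m → ℝ}

theorem alphaMap_eq_sum_pWeight_mul_alphaTau (hl : ∀ i, l i ≠ 0) (hinj : Function.Injective l)
    (hD : ∑ τ ∈ powersetCard n univ, psiPow ψ τ * piTau l τ ≠ 0) (j : Fin n) :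
    alphaMap l ψ n j = ∑ τ ∈ (powersetCard n univ).attach,
      pWeight (n := n) l ψ τ.1 * alphaTau l n τ.1 (mem_powersetCard.mp τ.2).2 j := by
  have hcramer := det_updateCol_eq_det_mul_inv_mulVec (Bmat l ψ n) (by rwa [det_Bmat])
    (fun a => ∑ i, l i ^ (a : ℕ) * ψ i) j
  rw [det_Bmat_updateCol hl hinj, det_Bmat] at hcramer
  simp only [pWeight, div_mul_eq_mul_div, ← sum_div]
  rw [eq_div_iff hD, hcramer, alphaMap, mul_comm]

theorem omegaMap_eq_sum_pWeight_smul_omegaTau (hl : ∀ i, l i ≠ 0)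
    (hinj : Function.Injective l)
    (hD : ∑ τ ∈ powersetCard n univ, psiPow ψ τ * piTau l τ ≠ 0) :
    omegaMap l ψ n = ∑ τ ∈ (powersetCard n univ).attach,
      pWeight (n := n) l ψ τ.1 • omegaTau l n τ.1 (mem_powersetCard.mp τ.2).2 := by
  ext i
  simp only [omegaMap, omegaTau, alphaMap_eq_sum_pWeight_mul_alphaTau hl hinj hD,
    Finset.sum_apply, Pi.smul_apply, smul_eq_mul, mul_sum]
  rw [sum_comm]
  exact sum_congr rfl fun τ _ => sum_congr rfl fun j _ => by ring

theorem psiPow_mul_piTau_nonneg (hpos : ∀ i, 0 < l i) (hinj : Function.Injective l)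
    (hψ : ∀ i, 0 ≤ ψ i) (τ : Finset (Fin m)) : 0 ≤ psiPow ψ τ * piTau l τ :=
  mul_nonneg (prod_nonneg fun i _ => hψ i) (piTau_pos hpos hinj τ).le

theorem sum_psiPow_mul_piTau_pos (hpos : ∀ i, 0 < l i) (hinj : Function.Injective l)
    (hψ : ∀ i, 0 ≤ ψ i) (hcard : n ≤ suppCard ψ) :
    0 < ∑ τ ∈ powersetCard n univ, psiPow ψ τ * piTau l τ := by
  have hsupp : n ≤ (univ.filter (ψ · ≠ 0)).card := by
    simpa [suppCard, Set.ncard_eq_toFinset_card'] using hcard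
  obtain ⟨τ, hτ, hτcard⟩ := exists_subset_card_eq hsupp
  refine sum_pos' (fun s _ => psiPow_mul_piTau_nonneg hpos hinj hψ s)
    ⟨τ, mem_powersetCard.mpr ⟨subset_univ τ, hτcard⟩, mul_pos ?_ (piTau_pos hpos hinj τ)⟩
  exact prod_pos fun i hi => (hψ i).lt_of_ne (mem_filter.mp (hτ hi)).2.symm

theorem sum_pWeight_eq_one (hD : ∑ τ ∈ powersetCard n univ, psiPow ψ τ * piTau l τ ≠ 0) :
    ∑ τ ∈ powersetCard n univ, pWeight (n := n) l ψ τ = 1 := by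
  simp only [pWeight]
  rw [← sum_div, div_self hD]

end Shrinkage

theorem stmt3_general {m n : ℕ} (l : Fin m → ℝ) (hpos : ∀ i, 0 < l i)
    (hanti : StrictAnti l) (ψ : Fin m → ℝ) (hψ : ∀ i, 0 ≤ ψ i)
    (hcard : n ≤ suppCard ψ) :
    omegaMap l ψ n =
        ∑ τ ∈ (Finset.powersetCard n (Finset.univ : Finset (Fin m))).attach,
          pWeight (n := n) l ψ τ.1 • omegaTau l n τ.1 (Finset.mem_powersetCard.mp τ.2).2 ∧
      (∀ τ ∈ Finset.powersetCard n (Finset.univ : Finset (Fin m)),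
          0 ≤ pWeight (n := n) l ψ τ) ∧
      ∑ τ ∈ Finset.powersetCard n (Finset.univ : Finset (Fin m)),
          pWeight (n := n) l ψ τ = 1 := by
  have hinj := hanti.injective
  have hD := sum_psiPow_mul_piTau_pos hpos hinj hψ hcard
  exact ⟨omegaMap_eq_sum_pWeight_smul_omegaTau (fun i => (hpos i).ne') hinj hD.ne',
    fun τ _ => div_nonneg (psiPow_mul_piTau_nonneg hpos hinj hψ τ) hD.le,
    sum_pWeight_eq_one hD.ne'⟩

theorem stmt3 {m n : ℕ} (hnm : n < m) (l : Fin m → ℝ) (hpos : ∀ i, 0 < l i)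
    (hanti : StrictAnti l) (ψ : Fin m → ℝ) (hψ : ∀ i, 0 ≤ ψ i)
    (hcard : n ≤ suppCard ψ) :
    omegaMap l ψ n =
        ∑ τ ∈ (Finset.powersetCard n (Finset.univ : Finset (Fin m))).attach,
          pWeight (n := n) l ψ τ.1 • omegaTau l n τ.1 (Finset.mem_powersetCard.mp τ.2).2 ∧
      (∀ τ ∈ Finset.powersetCard n (Finset.univ : Finset (Fin m)),
          0 ≤ pWeight (n := n) l ψ τ) ∧
      ∑ τ ∈ Finset.powersetCard n (Finset.univ : Finset (Fin m)),
          pWeight (n := n) l ψ τ = 1 :=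
  stmt3_general l hpos hanti ψ hψ hcard
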